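/- Let n ≥ 2. A subset F of the 3n-element set {x_i, y_i, z_i : 1 ≤ i ≤ n} is a facet of Δ_n (i.e., is maximal among subsets containing no triple {x_i, y_i, z_j} with 1 ≤ i < j ≤ n) if and only if there exist an index j with 1 ≤ j ≤ n and elements w_i ∈ {x_i, y_i} for 1 ≤ i ≤ j−1 such that F = {w_1, …, w_{j−1}} ∪ {x_i, y_i : j ≤ i ≤ n} ∪ {z_1, z_2, …, z_j}. -/

import Mathlib

/-- A subset of the vertex set `{xᵢ, yᵢ, zᵢ : 1 ≤ i ≤ n}` (identified with
`Fin n × Fin 3`, where `(i,0) = xᵢ`, `(i,1) = yᵢ`, `(i,2) = zᵢ`) is a face of `Δₙ`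
iff it contains no triple `{xᵢ, yᵢ, z_j}` with `i < j`. -/
def IsFaceOf (n : ℕ) (F : Finset (Fin n × Fin 3)) : Prop :=
  ¬ ∃ i j : Fin n, i < j ∧ (i, 0) ∈ F ∧ (i, 1) ∈ F ∧ (j, 2) ∈ F

/-- A facet of `Δₙ` is a maximal face. -/
def IsFacetOf (n : ℕ) (F : Finset (Fin n × Fin 3)) : Prop :=
  IsFaceOf n F ∧ ∀ G : Finset (Fin n × Fin 3), IsFaceOf n G → F ⊆ G → F = G

private lemma fin3_cases (c : Fin 3) (h : c ≠ 2) : c = 0 ∨ c = 1 := by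
  fin_cases c <;> simp_all

private lemma mk_ne {n : ℕ} (a b : Fin n) (c c' : Fin 3) (h : c ≠ c') :
    (a, c) ≠ (b, c') := fun he => h (congrArg Prod.snd he)

/-- `F` is a facet of `Δₙ` iff there are `j` (1-based: `j+1`) and choices
`wᵢ ∈ {xᵢ, yᵢ}` for `i < j` such that
`F = {w₁,…,w_{j−1}} ∪ {xᵢ, yᵢ : j ≤ i ≤ n} ∪ {z₁,…,z_j}`. -/
theorem stmt_2 (n : ℕ) (hn : 2 ≤ n) (F : Finset (Fin n × Fin 3)) :
    IsFacetOf n F ↔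
      ∃ (j : Fin n) (w : Fin n → Fin 3), (∀ i, w i = 0 ∨ w i = 1) ∧
        ∀ p : Fin n × Fin 3, p ∈ F ↔
          ((p.2 = 2 ∧ p.1 ≤ j) ∨ (p.2 ≠ 2 ∧ (j ≤ p.1 ∨ p.2 = w p.1))) := by
  constructor
  · rintro ⟨hface, hmax⟩
    -- key maximality principle
    have key : ∀ p : Fin n × Fin 3,
        (∀ i' j' : Fin n, i' < j' → ((i', (0:Fin 3)) = p ∨ (i', (0:Fin 3)) ∈ F) →
          ((i', (1:Fin 3)) = p ∨ (i', (1:Fin 3)) ∈ F) →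
          ((j', (2:Fin 3)) = p ∨ (j', (2:Fin 3)) ∈ F) → False) → p ∈ F := by
      intro p h
      have hf : IsFaceOf n (insert p F) := by
        rintro ⟨i', j', hij, h0, h1, h2⟩
        rw [Finset.mem_insert] at h0 h1 h2
        exact h i' j' hij h0 h1 h2
      have heq := hmax _ hf (Finset.subset_insert p F)
      rw [heq]; exact Finset.mem_insert_self p F
    haveI : NeZero n := ⟨by omega⟩
    -- set of indices with a z-vertex in F
    set T : Finset (Fin n) := Finset.univ.filter (fun i => (i, (2:Fin 3)) ∈ F) with hT
    have h0T : (0 : Fin n) ∈ T := by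
      rw [hT, Finset.mem_filter]
      refine ⟨Finset.mem_univ _, key _ ?_⟩
      intro i' j' hij h0 h1 h2
      have h0' := h0.resolve_left (mk_ne _ _ _ _ (by decide))
      have h1' := h1.resolve_left (mk_ne _ _ _ _ (by decide))
      rcases h2 with h2 | h2'
      · have hj0 : j' = (0 : Fin n) := congrArg Prod.fst h2
        have := Fin.lt_def.mp hij
        have := congrArg Fin.val hj0
        simp at this
        have h00 : ((0 : Fin n) : ℕ) = 0 := by simp
        omega
      · exact hface ⟨i', j', hij, h0', h1', h2'⟩
    have hTne : T.Nonempty := ⟨0, h0T⟩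
    set j : Fin n := T.max' hTne with hj
    have hjz : (j, (2:Fin 3)) ∈ F := (Finset.mem_filter.mp (T.max'_mem hTne)).2
    have hE : ∀ i : Fin n, (i, (2:Fin 3)) ∈ F → i ≤ j := by
      intro i hi
      exact Finset.le_max' T i (by rw [hT, Finset.mem_filter]; exact ⟨Finset.mem_univ _, hi⟩)
    -- no index below j has both x and y
    have hC : ∀ i : Fin n, i < j → ¬ ((i, (0:Fin 3)) ∈ F ∧ (i, (1:Fin 3)) ∈ F) := by
      rintro i hij ⟨h0, h1⟩
      exact hface ⟨i, j, hij, h0, h1, hjz⟩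
    -- z's form an initial segment up to j
    have hA : ∀ i : Fin n, i ≤ j → (i, (2:Fin 3)) ∈ F := by
      intro i hi
      apply key
      intro i' j' hij h0 h1 h2
      have h0' := h0.resolve_left (mk_ne _ _ _ _ (by decide))
      have h1' := h1.resolve_left (mk_ne _ _ _ _ (by decide))
      rcases h2 with h2 | h2'
      · have hji : j' = i := congrArg Prod.fst h2
        have hii : i' < j := by
          apply lt_of_lt_of_le _ hi
          rw [← hji]; exact hij
        exact hface ⟨i', j, hii, h0', h1', hjz⟩
      · exact hface ⟨i', j', hij, h0', h1', h2'⟩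
    -- above j, both x and y are present
    have hB : ∀ (i : Fin n) (c : Fin 3), j ≤ i → c ≠ 2 → (i, c) ∈ F := by
      intro i c hji hc
      apply key
      intro i' j' hij h0 h1 h2
      have h2' := h2.resolve_left (fun he => hc (congrArg Prod.snd he).symm)
      have hj'le := hE j' h2'
      rcases h0 with h0 | h0'
      · have hii : i' = i := congrArg Prod.fst h0
        have := Fin.lt_def.mp hij
        have := Fin.le_def.mp hj'le
        have := Fin.le_def.mp hji
        have := congrArg Fin.val hii
        omega
      rcases h1 with h1 | h1'
      · have hii : i' = i := congrArg Prod.fst h1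
        have := Fin.lt_def.mp hij
        have := Fin.le_def.mp hj'le
        have := Fin.le_def.mp hji
        have := congrArg Fin.val hii
        omega
      · exact hface ⟨i', j', hij, h0', h1', h2'⟩
    -- if one of x,y missing then the other present
    have hD0 : ∀ i : Fin n, (i, (1:Fin 3)) ∉ F → (i, (0:Fin 3)) ∈ F := by
      intro i hi
      apply key
      intro i' j' hij h0 h1 h2
      have h1' := h1.resolve_left (mk_ne _ _ _ _ (by decide))
      have h2' := h2.resolve_left (mk_ne _ _ _ _ (by decide))
      rcases h0 with h0 | h0'
      · have hii : i' = i := congrArg Prod.fst h0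
        exact hi (hii ▸ h1')
      · exact hface ⟨i', j', hij, h0', h1', h2'⟩
    have hD1 : ∀ i : Fin n, (i, (0:Fin 3)) ∉ F → (i, (1:Fin 3)) ∈ F := by
      intro i hi
      apply key
      intro i' j' hij h0 h1 h2
      have h0' := h0.resolve_left (mk_ne _ _ _ _ (by decide))
      have h2' := h2.resolve_left (mk_ne _ _ _ _ (by decide))
      rcases h1 with h1 | h1'
      · have hii : i' = i := congrArg Prod.fst h1
        exact hi (hii ▸ h0')
      · exact hface ⟨i', j', hij, h0', h1', h2'⟩
    refine ⟨j, fun i => if (i, (0:Fin 3)) ∈ F then 0 else 1, fun i => by by_cases h : ((i, (0:Fin 3)) ∈ F) <;> simp [h], ?_⟩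
    rintro ⟨i, c⟩
    simp only
    constructor
    · intro hp
      by_cases hc : c = 2
      · subst hc; exact Or.inl ⟨rfl, hE i hp⟩
      · refine Or.inr ⟨hc, ?_⟩
        rcases le_or_gt j i with hji | hij
        · exact Or.inl hji
        · right
          rcases fin3_cases c hc with rfl | rfl
          · simp [hp]
          · have h0 : (i, (0:Fin 3)) ∉ F := fun h0 => hC i hij ⟨h0, hp⟩
            simp [h0]
    · rintro (⟨rfl, hij⟩ | ⟨hc, hji | hcw⟩)
      · exact hA i hij
      · exact hB i c hji hc
      · rcases fin3_cases c hc with rfl | rfl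
        · by_cases h0 : (i, (0:Fin 3)) ∈ F
          · exact h0
          · simp [h0] at hcw
        · by_cases h0 : (i, (0:Fin 3)) ∈ F
          · simp [h0] at hcw
          · exact hD1 i h0
  · rintro ⟨j, w, hw, hF⟩
    have hjmem : ∀ c : Fin 3, c ≠ 2 → (j, c) ∈ F := by
      intro c hc
      rw [hF]; exact Or.inr ⟨hc, Or.inl le_rfl⟩
    have hjz : (j, (2:Fin 3)) ∈ F := by rw [hF]; exact Or.inl ⟨rfl, le_rfl⟩
    constructor
    · rintro ⟨i, j', hij, h0, h1, h2⟩
      rw [hF] at h0 h1 h2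
      simp only at h0 h1 h2
      rcases h0 with ⟨h, _⟩ | ⟨_, h0⟩
      · exact absurd h (by decide)
      rcases h1 with ⟨h, _⟩ | ⟨_, h1⟩
      · exact absurd h (by decide)
      rcases h2 with ⟨_, h2⟩ | ⟨h, _⟩
      · rcases h0 with hji | hw0
        · exact absurd ((h2.trans hji).trans_lt hij) (lt_irrefl _)
        rcases h1 with hji | hw1
        · exact absurd ((h2.trans hji).trans_lt hij) (lt_irrefl _)
        · rw [← hw0] at hw1; exact absurd hw1 (by decide)
      · exact absurd h (by simp)
    · intro G hG hFG
      apply Finset.Subset.antisymm hFG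
      intro p hp
      by_contra hpF
      obtain ⟨i, c⟩ := p
      rw [hF] at hpF
      push_neg at hpF
      simp only at hpF
      by_cases hc : c = 2
      · subst hc
        have hij : j < i := hpF.1 rfl
        exact hG ⟨j, i, hij, hFG (hjmem 0 (by decide)), hFG (hjmem 1 (by decide)), hp⟩
      · obtain ⟨hij, hcw⟩ := hpF.2 hc
        have hwne : w i ≠ 2 := by rcases hw i with h | h <;> rw [h] <;> decide
        have hwc : (i, w i) ∈ F := (hF _).mpr (Or.inr ⟨hwne, Or.inr rfl⟩)
        have hzj : (j, (2:Fin 3)) ∈ G := hFG hjz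
        rcases fin3_cases c hc with rfl | rfl
        · have hw1 : w i = 1 := by
            rcases hw i with h | h
            · exact absurd h.symm hcw
            · exact h
          rw [hw1] at hwc
          exact hG ⟨i, j, hij, hp, hFG hwc, hzj⟩
        · have hw0 : w i = 0 := by
            rcases hw i with h | h
            · exact h
            · exact absurd h.symm hcw
          rw [hw0] at hwc
          exact hG ⟨i, j, hij, hFG hwc, hp, hzj⟩
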